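/- arXiv:1610.07379 — 3 statements merged into one kernel-verified Lean document; each statement's English description precedes it below -/
import Mathlib

section
/- Let X be a finite type, let g : Finset X → ℝ be normalized, monotone, and submodular, and let c : X → ℝ be a positive cost function. Suppose x* ∈ X maximizes the benefit-cost ratio g({x}) / c(x) over all x ∈ X. Then for every finite set S ⊆ X, g({x*}) ≥ (c(x*) / (∑_{x ∈ S} c(x))) · g(S). -/
/-!
Submodularity with `S = ∅` makes `g` subadditive, so `g S ≤ ∑ x ∈ S, g {x}`. Each singleton value
is at most `c x` times the best ratio `g {x*} / c x*`, hence `g S ≤ (g {x*} / c x*) · c(S)`.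
-/

open Finset

theorem le_sum_apply_singleton_of_submodular {X : Type*} [DecidableEq X]
    (g : Finset X → ℝ) (hnorm : g ∅ = 0)
    (hsub : ∀ (S T : Finset X) (x : X), S ⊆ T → x ∉ T →
      g (insert x T) - g T ≤ g (insert x S) - g S)
    (S : Finset X) : g S ≤ ∑ x ∈ S, g {x} := by
  induction S using Finset.induction_on with
  | empty => simp [hnorm]
  | @insert a s ha ih =>
    have hgain := hsub ∅ s a (empty_subset s) ha
    rw [hnorm, insert_empty, sub_zero] at hgain
    rw [sum_insert ha]
    linarith

theorem stmt_0_general {X : Type*} [DecidableEq X]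
    (g : Finset X → ℝ) (c : X → ℝ)
    (hnorm : g ∅ = 0)
    (hmono : ∀ S T : Finset X, S ⊆ T → g S ≤ g T)
    (hsub : ∀ (S T : Finset X) (x : X), S ⊆ T → x ∉ T →
      g (insert x T) - g T ≤ g (insert x S) - g S)
    (hc : ∀ x : X, 0 < c x)
    (xstar : X)
    (hmax : ∀ x : X, g {x} / c x ≤ g {xstar} / c xstar) :
    ∀ S : Finset X, (c xstar / ∑ x ∈ S, c x) * g S ≤ g {xstar} := by
  intro S
  obtain rfl | hS := S.eq_empty_or_nonempty
  · simpa [hnorm] using hmono ∅ {xstar} (empty_subset _)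
  have hcost : 0 < ∑ x ∈ S, c x := sum_pos (fun x _ => hc x) hS
  have hgS : g S ≤ g {xstar} / c xstar * ∑ x ∈ S, c x := by
    rw [mul_sum]
    refine (le_sum_apply_singleton_of_submodular g hnorm hsub S).trans (sum_le_sum fun x _ => ?_)
    exact (div_le_iff₀ (hc x)).mp (hmax x)
  have hcstar := hc xstar
  calc (c xstar / ∑ x ∈ S, c x) * g S
      ≤ (c xstar / ∑ x ∈ S, c x) * (g {xstar} / c xstar * ∑ x ∈ S, c x) := by gcongr
    _ = g {xstar} := by field_simp

/-- Greedy benefit-cost guarantee for normalized monotone submodular functions: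
the point maximizing `g {x} / c x` satisfies `g {x*} ≥ (c x* / c(S)) * g S` for every set `S`. -/
theorem stmt_0 {X : Type*} [Fintype X] [DecidableEq X]
    (g : Finset X → ℝ) (c : X → ℝ)
    (hnorm : g ∅ = 0)
    (hmono : ∀ S T : Finset X, S ⊆ T → g S ≤ g T)
    (hsub : ∀ (S T : Finset X) (x : X), S ⊆ T → x ∉ T →
      g (insert x T) - g T ≤ g (insert x S) - g S)
    (hc : ∀ x : X, 0 < c x)
    (xstar : X)
    (hmax : ∀ x : X, g {x} / c x ≤ g {xstar} / c xstar) :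
    ∀ S : Finset X, (c xstar / ∑ x ∈ S, c x) * g S ≤ g {xstar} :=
  stmt_0_general g c hnorm hmono hsub hc xstar hmax
end

section
/- Let D be a finite set, let f, l, u : D → ℝ satisfy l(x) ≤ f(x) ≤ u(x) for all x ∈ D, let δ̄ ≥ 0 and η > 0, let M' ⊆ D, and suppose u(x) − l(x) ≤ 2(1 + δ̄)η for all x ∈ M'. Define M = {x ∈ M' : u(x) ≥ max_{x̄ ∈ M'} l(x̄)}. If x* ∈ M' is a maximizer of f over D, then x* ∈ M, and moreover every x ∈ M satisfies f(x) ≥ f(x*) − 4(1 + δ̄)η. -/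
open Finset

section ConfidenceBounds

variable {D R : Type*}

theorem lower_le_upper_of_isMaximizer [Preorder R] {f l u : D → R}
    (hconf : ∀ x, l x ≤ f x ∧ f x ≤ u x) {xstar : D} (hmax : ∀ y, f y ≤ f xstar) (y : D) :
    l y ≤ u xstar :=
  (hconf y).1.trans ((hmax y).trans (hconf xstar).2)

theorem sub_le_width_add_width [AddCommGroup R] [LinearOrder R] [IsOrderedAddMonoid R]
    {f l u : D → R} (hconf : ∀ x, l x ≤ f x ∧ f x ≤ u x) {x y : D} (hcross : l y ≤ u x) :
    f y - f x ≤ (u y - l y) + (u x - l x) := by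
  calc f y - f x ≤ u y - l x := sub_le_sub (hconf y).2 (hconf x).1
    _ = (u y - l y) + (l y - l x) := by abel
    _ ≤ (u y - l y) + (u x - l x) := by gcongr

end ConfidenceBounds

theorem stmt_5_general {D : Type*} [Fintype D] [DecidableEq D]
    (f l u : D → ℝ)
    (hconf : ∀ x : D, l x ≤ f x ∧ f x ≤ u x)
    (δbar η : ℝ)
    (M' : Finset D)
    (hwidth : ∀ x ∈ M', u x - l x ≤ 2 * (1 + δbar) * η)
    (M : Finset D)
    (hM : M = M'.filter fun x => ∀ xbar ∈ M', l xbar ≤ u x)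
    (xstar : D) (hxstar : xstar ∈ M') (hmax : ∀ y : D, f y ≤ f xstar) :
    xstar ∈ M ∧ ∀ x ∈ M, f xstar - 4 * (1 + δbar) * η ≤ f x := by
  subst hM
  have hcross := lower_le_upper_of_isMaximizer hconf hmax
  refine ⟨mem_filter.mpr ⟨hxstar, fun xbar _ => hcross xbar⟩, fun x hx => ?_⟩
  obtain ⟨hxM', hx⟩ := mem_filter.mp hx
  have hgap := sub_le_width_add_width hconf (hx xstar hxstar)
  linarith [hwidth x hxM', hwidth xstar hxstar]

/-- BO set update: if all confidence intervals on `M'` have width at most `2(1+δ̄)η`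
and `M` keeps the points of `M'` whose upper bound is at least every lower bound on `M'`,
then any maximizer `x*` of `f` lying in `M'` remains in `M`, and every point of `M` is
at most `4(1+δ̄)η`-suboptimal. -/
theorem stmt_5 {D : Type*} [Fintype D] [DecidableEq D]
    (f l u : D → ℝ)
    (hconf : ∀ x : D, l x ≤ f x ∧ f x ≤ u x)
    (δbar η : ℝ) (hδ : 0 ≤ δbar) (hη : 0 < η)
    (M' : Finset D)
    (hwidth : ∀ x ∈ M', u x - l x ≤ 2 * (1 + δbar) * η)
    (M : Finset D)
    (hM : M = M'.filter fun x => ∀ xbar ∈ M', l xbar ≤ u x)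
    (xstar : D) (hxstar : xstar ∈ M') (hmax : ∀ y : D, f y ≤ f xstar) :
    xstar ∈ M ∧ ∀ x ∈ M, f xstar - 4 * (1 + δbar) * η ≤ f x :=
  stmt_5_general f l u hconf δbar η M' hwidth M hM xstar hxstar hmax
end

section
/- Let t ≥ 1, let x₁, …, x_t, x_{t+1}, x̄ be points of a set D, let k : D × D → ℝ be a symmetric kernel such that the (t+2)×(t+2) matrix [k(·,·)] over the tuple (x₁, …, x_{t+1}, x̄) is positive semidefinite, and let σ²(x₁), …, σ²(x_{t+1}) > 0 be noise variances. Then the posterior variance after t+1 observations satisfies the rank-one update identity σ_{t+1}²(x̄) = σ_t²(x̄) − Cov_t(x̄, x_{t+1})² / (σ²(x_{t+1}) + σ_t²(x_{t+1})), where σ_s²(x) = k(x,x) − k_s(x)ᵀ (K_s + Σ_s)^{−1} k_s(x) and Cov_t(x̄, x) = k(x̄, x) − k_t(x̄)ᵀ (K_t + Σ_t)^{−1} k_t(x). In particular, σ_{t+1}²(x̄) ≤ σ_t²(x̄). -/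
open Matrix

/-- The Gaussian process posterior variance
`σ_s²(x) = k(x,x) - k_s(x)ᵀ (K_s + Σ_s)⁻¹ k_s(x)`. -/
noncomputable def postVar {D : Type*} {n : ℕ} (k : D → D → ℝ) (xs : Fin n → D)
    (σ2 : Fin n → ℝ) (x : D) : ℝ :=
  k x x - (fun i => k (xs i) x) ⬝ᵥ
    (((Matrix.of fun i j => k (xs i) (xs j)) + Matrix.diagonal σ2)⁻¹ *ᵥ fun i => k (xs i) x)

/-- The Gaussian process posterior covariance
`Cov_s(a, b) = k(a,b) - k_s(a)ᵀ (K_s + Σ_s)⁻¹ k_s(b)`. -/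
noncomputable def postCov {D : Type*} {n : ℕ} (k : D → D → ℝ) (xs : Fin n → D)
    (σ2 : Fin n → ℝ) (a b : D) : ℝ :=
  k a b - (fun i => k (xs i) a) ⬝ᵥ
    (((Matrix.of fun i j => k (xs i) (xs j)) + Matrix.diagonal σ2)⁻¹ *ᵥ fun i => k (xs i) b)

/-
Listing the new observation last makes the noisy kernel matrix `M = K_{t+1} + Σ_{t+1}` a
symmetric bordered matrix `[[A, b], [bᵀ, c]]` with `A = K_t + Σ_t`. Block elimination solves
`M z = v` explicitly, which shows that `M` is invertible and gives
`vᵀ M⁻¹ v = uᵀ A⁻¹ u + (β - uᵀ A⁻¹ b)² / (c - bᵀ A⁻¹ b)` for `v = (u, β)`.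
With `v = k_{t+1}(x̄)` the correction is `Cov_t(x̄, x_{t+1})²` and the Schur complement
`c - bᵀ A⁻¹ b` is `σ²(x_{t+1}) + σ_t²(x_{t+1})`; it is positive because it equals `zᵀ M z`
for `z = (-A⁻¹ b, 1)` and `M` is positive definite.
-/

namespace Matrix

theorem mulVec_nonsing_inv_mulVec {m R : Type*} [Fintype m] [DecidableEq m] [CommRing R]
    {A : Matrix m m R} (hA : IsUnit A) (x : m → R) : A *ᵥ A⁻¹ *ᵥ x = x := by
  rw [mulVec_mulVec, mul_nonsing_inv _ ((isUnit_iff_isUnit_det A).mp hA), one_mulVec]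

variable {n : ℕ}

theorem snoc_dotProduct_snoc {R : Type*} [CommSemiring R] (v w : Fin n → R) (a c : R) :
    (Fin.snoc v a : Fin (n + 1) → R) ⬝ᵥ Fin.snoc w c = v ⬝ᵥ w + a * c := by
  simp [dotProduct, Fin.sum_univ_castSucc]

theorem mulVec_snoc_of_isSymm {R : Type*} [CommSemiring R]
    {M : Matrix (Fin (n + 1)) (Fin (n + 1)) R} {A : Matrix (Fin n) (Fin n) R} {b : Fin n → R}
    (hM : M.IsSymm)
    (hMA : ∀ i j, M i.castSucc j.castSucc = A i j) (hMb : ∀ i, M i.castSucc (Fin.last n) = b i)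
    (w : Fin n → R) (a : R) :
    M *ᵥ Fin.snoc w a = Fin.snoc (A *ᵥ w + a • b) (b ⬝ᵥ w + M (Fin.last n) (Fin.last n) * a) := by
  ext i
  induction i using Fin.lastCases with
  | last => simp [mulVec, dotProduct, Fin.sum_univ_castSucc, hM.apply, hMb]
  | cast i => simp [mulVec, dotProduct, Fin.sum_univ_castSucc, hMA, hMb, mul_comm]

variable {K : Type*} [Field K] {M : Matrix (Fin (n + 1)) (Fin (n + 1)) K}
  {A : Matrix (Fin n) (Fin n) K} {b : Fin n → K}

theorem mulVec_snoc_nonsing_inv_of_isSymm (hM : M.IsSymm)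
    (hMA : ∀ i j, M i.castSucc j.castSucc = A i j) (hMb : ∀ i, M i.castSucc (Fin.last n) = b i)
    (hA : IsUnit A) (v : Fin (n + 1) → K) {γ : K}
    (hγ : γ * (M (Fin.last n) (Fin.last n) - b ⬝ᵥ A⁻¹ *ᵥ b) =
      v (Fin.last n) - b ⬝ᵥ A⁻¹ *ᵥ Fin.init v) :
    M *ᵥ Fin.snoc (A⁻¹ *ᵥ (Fin.init v - γ • b)) γ = v := by
  rw [mulVec_snoc_of_isSymm hM hMA hMb, mulVec_nonsing_inv_mulVec hA]
  ext i
  induction i using Fin.lastCases with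
  | last =>
    rw [Fin.snoc_last, mulVec_sub, mulVec_smul, dotProduct_sub, dotProduct_smul, smul_eq_mul]
    linear_combination hγ
  | cast i => simp [Fin.init]

theorem dotProduct_nonsing_inv_mulVec_of_isSymm (hM : M.IsSymm)
    (hMA : ∀ i j, M i.castSucc j.castSucc = A i j) (hMb : ∀ i, M i.castSucc (Fin.last n) = b i)
    (hA : IsUnit A) (hs : M (Fin.last n) (Fin.last n) - b ⬝ᵥ A⁻¹ *ᵥ b ≠ 0) (v : Fin (n + 1) → K) :
    v ⬝ᵥ M⁻¹ *ᵥ v = Fin.init v ⬝ᵥ A⁻¹ *ᵥ Fin.init v +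
      (v (Fin.last n) - Fin.init v ⬝ᵥ A⁻¹ *ᵥ b) ^ 2 /
        (M (Fin.last n) (Fin.last n) - b ⬝ᵥ A⁻¹ *ᵥ b) := by
  have hMunit : IsUnit M := mulVec_surjective_iff_isUnit.mp fun w =>
    ⟨_, mulVec_snoc_nonsing_inv_of_isSymm hM hMA hMb hA w (div_mul_cancel₀ _ hs)⟩
  have hAsymm : A.IsSymm := by
    ext i j
    rw [transpose_apply, ← hMA, ← hMA, hM.apply]
  have hcomm : b ⬝ᵥ A⁻¹ *ᵥ Fin.init v = Fin.init v ⬝ᵥ A⁻¹ *ᵥ b := by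
    rw [dotProduct_mulVec, ← mulVec_transpose, hAsymm.inv.eq, dotProduct_comm]
  set s := M (Fin.last n) (Fin.last n) - b ⬝ᵥ A⁻¹ *ᵥ b
  set γ := (v (Fin.last n) - b ⬝ᵥ A⁻¹ *ᵥ Fin.init v) / s
  have hMinv : M⁻¹ *ᵥ v = Fin.snoc (A⁻¹ *ᵥ (Fin.init v - γ • b)) γ := by
    conv_lhs => rw [← mulVec_snoc_nonsing_inv_of_isSymm hM hMA hMb hA v (div_mul_cancel₀ _ hs)]
    rw [mulVec_mulVec, nonsing_inv_mul _ ((isUnit_iff_isUnit_det M).mp hMunit), one_mulVec]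
  rw [hMinv]
  nth_rewrite 1 [← Fin.snoc_init_self v]
  rw [snoc_dotProduct_snoc, mulVec_sub, mulVec_smul, dotProduct_sub, dotProduct_smul, smul_eq_mul]
  simp only [γ, hcomm]
  field_simp
  ring

theorem PosDef.sub_dotProduct_nonsing_inv_mulVec_pos {M : Matrix (Fin (n + 1)) (Fin (n + 1)) ℝ}
    {A : Matrix (Fin n) (Fin n) ℝ} {b : Fin n → ℝ} (hM : M.PosDef)
    (hMA : ∀ i j, M i.castSucc j.castSucc = A i j) (hMb : ∀ i, M i.castSucc (Fin.last n) = b i) :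
    0 < M (Fin.last n) (Fin.last n) - b ⬝ᵥ A⁻¹ *ᵥ b := by
  have hA : IsUnit A := by
    have hsub : M.submatrix Fin.castSucc Fin.castSucc = A := by ext i j; exact hMA i j
    exact (hsub ▸ hM.submatrix (Fin.castSucc_injective n)).isUnit
  set z : Fin (n + 1) → ℝ := Fin.snoc (-(A⁻¹ *ᵥ b)) (1 : ℝ)
  have hz : z ≠ 0 := fun h => by simpa [z] using congrFun h (Fin.last n)
  have hMz : M *ᵥ z = Fin.snoc 0 (M (Fin.last n) (Fin.last n) - b ⬝ᵥ A⁻¹ *ᵥ b) := by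
    rw [mulVec_snoc_of_isSymm (isHermitian_iff_isSymm.mp hM.isHermitian) hMA hMb, mulVec_neg,
      mulVec_nonsing_inv_mulVec hA, dotProduct_neg]
    congr 1 <;> simp only [one_smul, neg_add_cancel, mul_one, neg_add_eq_sub]
  simpa [hMz, z, snoc_dotProduct_snoc] using hM.dotProduct_mulVec_pos hz

end Matrix

section GaussianProcess

variable {D : Type*} {n : ℕ}

noncomputable def noisyKernelMatrix (k : D → D → ℝ) (xs : Fin n → D) (σ2 : Fin n → ℝ) :
    Matrix (Fin n) (Fin n) ℝ :=
  of (fun i j => k (xs i) (xs j)) + diagonal σ2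

theorem postVar_eq_noisyKernelMatrix (k : D → D → ℝ) (xs : Fin n → D) (σ2 : Fin n → ℝ) (x : D) :
    postVar k xs σ2 x = k x x - (fun i => k (xs i) x) ⬝ᵥ
      (noisyKernelMatrix k xs σ2)⁻¹ *ᵥ fun i => k (xs i) x :=
  rfl

theorem postCov_eq_noisyKernelMatrix (k : D → D → ℝ) (xs : Fin n → D) (σ2 : Fin n → ℝ) (a b : D) :
    postCov k xs σ2 a b = k a b - (fun i => k (xs i) a) ⬝ᵥ
      (noisyKernelMatrix k xs σ2)⁻¹ *ᵥ fun i => k (xs i) b :=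
  rfl

theorem posDef_noisyKernelMatrix {k : D → D → ℝ} {xs : Fin n → D} {σ2 : Fin n → ℝ}
    (hK : (of fun i j => k (xs i) (xs j)).PosSemidef) (hσ2 : ∀ i, 0 < σ2 i) :
    (noisyKernelMatrix k xs σ2).PosDef :=
  PosDef.posSemidef_add hK (PosDef.diagonal hσ2)

theorem noisyKernelMatrix_castSucc_castSucc (k : D → D → ℝ) (xs : Fin (n + 1) → D)
    (σ2 : Fin (n + 1) → ℝ) (i j : Fin n) :
    noisyKernelMatrix k xs σ2 i.castSucc j.castSucc =
      noisyKernelMatrix k (fun i => xs i.castSucc) (fun i => σ2 i.castSucc) i j := by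
  simp [noisyKernelMatrix, diagonal_apply]

theorem noisyKernelMatrix_castSucc_last (k : D → D → ℝ) (xs : Fin (n + 1) → D)
    (σ2 : Fin (n + 1) → ℝ) (i : Fin n) :
    noisyKernelMatrix k xs σ2 i.castSucc (Fin.last n) = k (xs i.castSucc) (xs (Fin.last n)) := by
  simp [noisyKernelMatrix, (Fin.castSucc_lt_last i).ne]

theorem noisyKernelMatrix_last_last (k : D → D → ℝ) (xs : Fin (n + 1) → D)
    (σ2 : Fin (n + 1) → ℝ) :
    noisyKernelMatrix k xs σ2 (Fin.last n) (Fin.last n) =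
      σ2 (Fin.last n) + k (xs (Fin.last n)) (xs (Fin.last n)) := by
  simp [noisyKernelMatrix, add_comm]

theorem posSemidef_kernel_castSucc {k : D → D → ℝ} {ys : Fin (n + 1) → D}
    (hK : (of fun i j => k (ys i) (ys j)).PosSemidef) :
    (of fun i j : Fin n => k (ys i.castSucc) (ys j.castSucc)).PosSemidef :=
  hK.submatrix Fin.castSucc

theorem add_postVar_pos {k : D → D → ℝ} {xs : Fin (n + 1) → D} {σ2 : Fin (n + 1) → ℝ}
    (hK : (of fun i j => k (xs i) (xs j)).PosSemidef) (hσ2 : ∀ i, 0 < σ2 i) :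
    0 < σ2 (Fin.last n) +
      postVar k (fun i => xs i.castSucc) (fun i => σ2 i.castSucc) (xs (Fin.last n)) := by
  have hs := (posDef_noisyKernelMatrix hK hσ2).sub_dotProduct_nonsing_inv_mulVec_pos
    (noisyKernelMatrix_castSucc_castSucc k xs σ2) (noisyKernelMatrix_castSucc_last k xs σ2)
  rw [noisyKernelMatrix_last_last] at hs
  rw [postVar_eq_noisyKernelMatrix]
  linarith

theorem postVar_eq_sub_postCov_sq_div {k : D → D → ℝ} {xs : Fin (n + 1) → D} {x : D}
    {σ2 : Fin (n + 1) → ℝ}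
    (hK : (of fun i j : Fin (n + 2) =>
      k ((Fin.snoc xs x : Fin (n + 2) → D) i) ((Fin.snoc xs x : Fin (n + 2) → D) j)).PosSemidef)
    (hσ2 : ∀ i, 0 < σ2 i) :
    postVar k xs σ2 x =
      postVar k (fun i => xs i.castSucc) (fun i => σ2 i.castSucc) x -
        postCov k (fun i => xs i.castSucc) (fun i => σ2 i.castSucc) x (xs (Fin.last n)) ^ 2 /
          (σ2 (Fin.last n) +
            postVar k (fun i => xs i.castSucc) (fun i => σ2 i.castSucc) (xs (Fin.last n))) := by
  have hKxs : (of fun i j => k (xs i) (xs j)).PosSemidef := by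
    simpa [Fin.snoc_castSucc] using posSemidef_kernel_castSucc hK
  have hM := posDef_noisyKernelMatrix hKxs hσ2
  have hA := posDef_noisyKernelMatrix (posSemidef_kernel_castSucc hKxs) fun i => hσ2 i.castSucc
  have hk : k (xs (Fin.last n)) x = k x (xs (Fin.last n)) := by
    simpa [Fin.snoc_castSucc] using
      (hK.isHermitian.apply (Fin.last n).castSucc (Fin.last (n + 1))).symm
  have hden : σ2 (Fin.last n) +
      postVar k (fun i => xs i.castSucc) (fun i => σ2 i.castSucc) (xs (Fin.last n)) =
      noisyKernelMatrix k xs σ2 (Fin.last n) (Fin.last n) -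
        (fun i => k (xs i.castSucc) (xs (Fin.last n))) ⬝ᵥ
          (noisyKernelMatrix k (fun i => xs i.castSucc) (fun i => σ2 i.castSucc))⁻¹ *ᵥ
            fun i => k (xs i.castSucc) (xs (Fin.last n)) := by
    rw [postVar_eq_noisyKernelMatrix, noisyKernelMatrix_last_last]
    ring
  have hs := hden ▸ (add_postVar_pos hKxs hσ2).ne'
  have hupdate := dotProduct_nonsing_inv_mulVec_of_isSymm
    (isHermitian_iff_isSymm.mp hM.isHermitian) (noisyKernelMatrix_castSucc_castSucc k xs σ2)
    (noisyKernelMatrix_castSucc_last k xs σ2) hA.isUnit hs (fun i => k (xs i) x)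
  simp only [Fin.init_def] at hupdate
  rw [hden, postVar_eq_noisyKernelMatrix, postVar_eq_noisyKernelMatrix,
    postCov_eq_noisyKernelMatrix, hupdate, hk]
  ring

end GaussianProcess

theorem stmt_16_general {D : Type*} (t : ℕ) (xs : Fin (t + 1) → D) (xbar : D)
    (k : D → D → ℝ)
    (hPSD : (Matrix.of fun i j : Fin (t + 2) =>
      k ((Fin.snoc xs xbar : Fin (t + 2) → D) i)
        ((Fin.snoc xs xbar : Fin (t + 2) → D) j)).PosSemidef)
    (σ2 : Fin (t + 1) → ℝ) (hσ2 : ∀ i, 0 < σ2 i) :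
    postVar k xs σ2 xbar =
      postVar k (fun i : Fin t => xs i.castSucc) (fun i => σ2 i.castSucc) xbar -
        (postCov k (fun i : Fin t => xs i.castSucc) (fun i => σ2 i.castSucc) xbar
            (xs (Fin.last t))) ^ 2 /
          (σ2 (Fin.last t) +
            postVar k (fun i : Fin t => xs i.castSucc) (fun i => σ2 i.castSucc)
              (xs (Fin.last t))) ∧
    postVar k xs σ2 xbar ≤
      postVar k (fun i : Fin t => xs i.castSucc) (fun i => σ2 i.castSucc) xbar := by
  have hupdate := postVar_eq_sub_postCov_sq_div hPSD hσ2
  have hpos := add_postVar_pos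
    (by simpa [Fin.snoc_castSucc] using posSemidef_kernel_castSucc hPSD) hσ2
  exact ⟨hupdate, hupdate ▸ sub_le_self _ (div_nonneg (sq_nonneg _) hpos.le)⟩

/-- Rank-one update of the posterior variance upon observing the `(t+1)`-st point:
`σ_{t+1}²(x̄) = σ_t²(x̄) - Cov_t(x̄, x_{t+1})² / (σ²(x_{t+1}) + σ_t²(x_{t+1}))`;
in particular, the posterior variance is non-increasing. -/
theorem stmt_16 {D : Type*} (t : ℕ) (ht : 1 ≤ t) (xs : Fin (t + 1) → D) (xbar : D)
    (k : D → D → ℝ) (hsymm : ∀ a b : D, k a b = k b a)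
    (hPSD : (Matrix.of fun i j : Fin (t + 2) =>
      k ((Fin.snoc xs xbar : Fin (t + 2) → D) i)
        ((Fin.snoc xs xbar : Fin (t + 2) → D) j)).PosSemidef)
    (σ2 : Fin (t + 1) → ℝ) (hσ2 : ∀ i, 0 < σ2 i) :
    postVar k xs σ2 xbar =
      postVar k (fun i : Fin t => xs i.castSucc) (fun i => σ2 i.castSucc) xbar -
        (postCov k (fun i : Fin t => xs i.castSucc) (fun i => σ2 i.castSucc) xbar
            (xs (Fin.last t))) ^ 2 /
          (σ2 (Fin.last t) +
            postVar k (fun i : Fin t => xs i.castSucc) (fun i => σ2 i.castSucc)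
              (xs (Fin.last t))) ∧
    postVar k xs σ2 xbar ≤
      postVar k (fun i : Fin t => xs i.castSucc) (fun i => σ2 i.castSucc) xbar :=
  stmt_16_general t xs xbar k hPSD σ2 hσ2
end
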